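/- arXiv:2007.02293 — 4 statements merged into one kernel-verified Lean document; each statement's English description precedes it below -/
import Mathlib

section
/- For every n ≥ 1 and k with 1 ≤ k ≤ n, the unsigned Stirling number of the first kind satisfies c(n,k) = (n!/k!) · Σ 1/(m_1 ⋯ m_k), where the sum is over all tuples (m_1,…,m_k) of positive integers with m_1+⋯+m_k = n. -/
/-- The unsigned Stirling numbers of the first kind. -/
def stirling1 : ℕ → ℕ → ℕ
  | 0, 0 => 1
  | 0, _ + 1 => 0
  | _ + 1, 0 => 0
  | n + 1, k + 1 => n * stirling1 n (k + 1) + stirling1 n k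

/-!
Let `L = ∑_{m ≥ 1} Xᵐ / m = -log (1 - X)`. The sum over compositions of `n` into `k` parts is the
coefficient of `Xⁿ` in `Lᵏ`. Since `L' · (1 - X) = 1`, the series `F = Lᵏ⁺¹` satisfies
`F' · (1 - X) = (k + 1) Lᵏ`, and comparing coefficients of `Xⁿ` gives
`(n + 1) [Xⁿ⁺¹] Lᵏ⁺¹ = n [Xⁿ] Lᵏ⁺¹ + (k + 1) [Xⁿ] Lᵏ`.
After scaling by `n! / k!` this is the defining recurrence of `c(n, k)`.
-/

open Finset PowerSeries
open scoped Nat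

namespace PowerSeries

theorem coeff_prod_univ_fin {R : Type*} [CommSemiring R] {k : ℕ} (f : Fin k → R⟦X⟧) (n : ℕ) :
    coeff n (∏ i, f i) = ∑ m ∈ Nat.antidiagonalTuple k n, ∏ i, coeff (m i) (f i) := by
  rw [coeff_prod, finsuppAntidiag, sum_map, ← piAntidiag_univ_fin_eq_antidiagonalTuple,
    ← sum_attach (piAntidiag univ n)]
  rfl

theorem coeff_pow_eq_sum_antidiagonalTuple {R : Type*} [CommSemiring R] (f : R⟦X⟧) (k n : ℕ) :
    coeff n (f ^ k) = ∑ m ∈ Nat.antidiagonalTuple k n, ∏ i, coeff (m i) f := by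
  simpa using coeff_prod_univ_fin (fun _ : Fin k => f) n

theorem coeff_derivative_mul_one_sub_X {R : Type*} [CommRing R] (F : R⟦X⟧) (n : ℕ) :
    coeff n (d⁄dX R F * (1 - X)) = (n + 1) * coeff (n + 1) F - n * coeff n F := by
  rcases n with _ | n
  · rw [mul_sub, mul_one, map_sub, coeff_zero_mul_X, coeff_derivative]
    simp
  · rw [mul_sub, mul_one, map_sub, coeff_succ_mul_X, coeff_derivative, coeff_derivative]
    push_cast
    ring

end PowerSeries

section NegLogOneSub

variable (K : Type*) [Field K]

/-- `-log (1 - X) = ∑ Xᵐ / m`; its constant coefficient is the junk value `(0 : K)⁻¹ = 0`. -/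
noncomputable def negLogOneSub : K⟦X⟧ := mk fun m => (m : K)⁻¹

variable {K}

theorem coeff_negLogOneSub_pow (k n : ℕ) :
    coeff n (negLogOneSub K ^ k) =
      ∑ m ∈ (Nat.antidiagonalTuple k n).filter fun m => ∀ i, 0 < m i, ∏ i, (m i : K)⁻¹ := by
  simp only [coeff_pow_eq_sum_antidiagonalTuple, negLogOneSub, coeff_mk]
  symm
  apply sum_filter_of_ne
  intro m _ hm i
  refine Nat.pos_of_ne_zero fun hi => hm ?_
  exact prod_eq_zero (mem_univ i) (by simp [hi])

variable [CharZero K]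

theorem derivative_negLogOneSub_mul_one_sub_X : d⁄dX K (negLogOneSub K) * (1 - X) = 1 := by
  convert mk_one_mul_one_sub_eq_one K
  ext n
  rw [negLogOneSub, coeff_derivative, coeff_mk, coeff_mk]
  push_cast
  exact inv_mul_cancel₀ (Nat.cast_add_one_ne_zero n)

theorem succ_mul_coeff_negLogOneSub_pow_succ (n k : ℕ) :
    (n + 1) * coeff (n + 1) (negLogOneSub K ^ (k + 1)) =
      n * coeff n (negLogOneSub K ^ (k + 1)) + (k + 1) * coeff n (negLogOneSub K ^ k) := by
  have hderiv :
      d⁄dX K (negLogOneSub K ^ (k + 1)) * (1 - X) = C (k + 1 : K) * negLogOneSub K ^ k := by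
    rw [derivative_pow, mul_assoc, derivative_negLogOneSub_mul_one_sub_X]
    simp
  have hcoeff := congrArg (coeff n) hderiv
  rw [coeff_derivative_mul_one_sub_X, coeff_C_mul] at hcoeff
  linear_combination hcoeff

end NegLogOneSub

theorem factorial_mul_stirling1_eq {K : Type*} [Field K] [CharZero K] (n k : ℕ) :
    (k ! : K) * stirling1 n k = n ! * coeff n (negLogOneSub K ^ k) := by
  induction n generalizing k with
  | zero => cases k <;> simp [stirling1, negLogOneSub, coeff_zero_eq_constantCoeff_apply]
  | succ n ih =>
    cases k with
    | zero => simp [stirling1, coeff_one]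
    | succ k =>
      have ih_succ := ih (k + 1)
      simp only [stirling1, Nat.factorial_succ] at ih_succ ⊢
      push_cast at ih_succ ⊢
      linear_combination (n : K) * ih_succ + (k + 1 : K) * ih k -
        (n ! : K) * succ_mul_coeff_negLogOneSub_pow_succ (K := K) n k

theorem stirling1_eq_sum_over_compositions_general (n k : ℕ) :
    (stirling1 n k : ℚ) =
      (n.factorial : ℚ) / (k.factorial : ℚ) *
        ∑ m ∈ (Finset.Nat.antidiagonalTuple k n).filter fun m => ∀ i, 0 < m i,
          ∏ i, ((m i : ℚ))⁻¹ := by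
  rw [← coeff_negLogOneSub_pow, div_mul_eq_mul_div, ← factorial_mul_stirling1_eq (K := ℚ)]
  field_simp

theorem stirling1_eq_sum_over_compositions (n k : ℕ) (hn : 1 ≤ n) (hk : 1 ≤ k)
    (hkn : k ≤ n) :
    (stirling1 n k : ℚ) =
      (n.factorial : ℚ) / (k.factorial : ℚ) *
        ∑ m ∈ (Finset.Nat.antidiagonalTuple k n).filter fun m => ∀ i, 0 < m i,
          ∏ i, ((m i : ℚ))⁻¹ :=
  stirling1_eq_sum_over_compositions_general n k
end

section
/- For all natural numbers n ≥ 1, j with 0 ≤ j ≤ n, and all b ≥ 0, the identity Σ_{k=0}^{n} c_b(n+b, k+b) · S_b(k+b, j+b) = (n!/j!) · binom(n+2b−1, n−j) holds, where c_b and S_b denote the b-Stirling numbers of the first and second kind respectively. -/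
/-- The Stirling numbers of the second kind. -/
def stirling2 : ℕ → ℕ → ℕ
  | 0, 0 => 1
  | 0, _ + 1 => 0
  | _ + 1, 0 => 0
  | n + 1, k + 1 => (k + 1) * stirling2 n (k + 1) + stirling2 n k

/-- The `r`-Stirling number of the first kind `c_r(n+r, k+r)`, via
`c_r(n+r,k+r) = Σ_{m=0}^{n−k} binom(n,m) c(n−m,k) r^{(m)}`. -/
def rStirling1 (r n k : ℕ) : ℕ :=
  ∑ m ∈ Finset.range (n - k + 1), n.choose m * stirling1 (n - m) k * r.ascFactorial m

/-- The `r`-Stirling number of the second kind `S_r(n+r, k+r)`, via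
`S_r(n+r,k+r) = Σ_{m=k}^{n} binom(n,m) S(m,k) r^{n−m}`. -/
def rStirling2 (r n k : ℕ) : ℕ :=
  ∑ m ∈ Finset.Icc k n, n.choose m * stirling2 m k * r ^ (n - m)

/-!
With indices shifted by `r` as in `rStirling1`, `rStirling2`, the `r`-Stirling numbers satisfy the
triangular recurrences `c_r(n+1, k+1) = (n + r) c_r(n, k+1) + c_r(n, k)` and
`S_r(n+1, k+1) = (k + 1 + r) S_r(n, k+1) + S_r(n, k)`: written as binomial convolutions along the
antidiagonal, this is Pascal's rule. Hence the product sum `Σ_k c_r(n, k) S_r(k, j)` satisfies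
the `r`-Lah recurrence `L(n+1, j+1) = (n + j + 1 + 2r) L(n, j+1) + L(n, j)`,
`L(n+1, 0) = (n + 2r) L(n, 0)`, whose solution is
`binom(n, j) (j + 2r)^(n-j) = n!/j! binom(n + 2r - 1, n - j)` (rising factorial).
-/

open Finset Nat

theorem stirling1_eq_stirlingFirst : ∀ n k, stirling1 n k = stirlingFirst n k
  | 0, 0 | 0, _ + 1 | _ + 1, 0 => rfl
  | n + 1, k + 1 => by
    rw [stirling1, stirlingFirst_succ_succ, stirling1_eq_stirlingFirst n (k + 1),
      stirling1_eq_stirlingFirst n k]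

theorem stirling2_eq_stirlingSecond : ∀ n k, stirling2 n k = stirlingSecond n k
  | 0, 0 | 0, _ + 1 | _ + 1, 0 => rfl
  | n + 1, k + 1 => by
    rw [stirling2, stirlingSecond_succ_succ, stirling2_eq_stirlingSecond n (k + 1),
      stirling2_eq_stirlingSecond n k]

section rStirling

variable (r : ℕ)

theorem rStirling1_eq_sum_antidiagonal (n k : ℕ) :
    rStirling1 r n k =
      ∑ p ∈ antidiagonal n, n.choose p.1 * (r.ascFactorial p.1 * stirlingFirst p.2 k) := by
  rw [rStirling1, sum_antidiagonal_eq_sum_range_succ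
    (fun i l => n.choose i * (r.ascFactorial i * stirlingFirst l k))]
  refine sum_subset (range_subset_range.2 (by omega)) (fun m hm hmk => ?_) |>.trans
    (sum_congr rfl fun m _ => by rw [stirling1_eq_stirlingFirst]; ring)
  rw [mem_range] at hm hmk
  rw [stirling1_eq_stirlingFirst, stirlingFirst_eq_zero_of_lt (by omega)]
  simp

theorem rStirling2_eq_sum_antidiagonal (n k : ℕ) :
    rStirling2 r n k =
      ∑ p ∈ antidiagonal n, n.choose p.1 * (stirlingSecond p.1 k * r ^ p.2) := by
  rw [rStirling2, sum_antidiagonal_eq_sum_range_succ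
    (fun i l => n.choose i * (stirlingSecond i k * r ^ l))]
  refine sum_subset (fun m hm => mem_range.2 (by have := (mem_Icc.1 hm).2; omega))
    (fun m hm hmk => ?_) |>.trans
    (sum_congr rfl fun m _ => by rw [stirling2_eq_stirlingSecond]; ring)
  rw [mem_range] at hm
  rw [mem_Icc] at hmk
  rw [stirling2_eq_stirlingSecond, stirlingSecond_eq_zero_of_lt (by omega)]
  simp

theorem rStirling1_zero_right (n : ℕ) : rStirling1 r n 0 = r.ascFactorial n := by
  rw [rStirling1, sum_eq_single_of_mem n (by simp)]
  · simp [stirling1_eq_stirlingFirst]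
  · intro m hm hmn
    obtain ⟨l, hl⟩ : ∃ l, n - m = l + 1 := ⟨n - m - 1, by have := mem_range.1 hm; omega⟩
    simp [hl, stirling1_eq_stirlingFirst]

theorem rStirling2_zero_right (n : ℕ) : rStirling2 r n 0 = r ^ n := by
  rw [rStirling2, sum_eq_single_of_mem 0 (by simp)]
  · simp [stirling2_eq_stirlingSecond]
  · intro m _ hm
    obtain ⟨l, rfl⟩ := exists_eq_succ_of_ne_zero hm
    simp [stirling2_eq_stirlingSecond]

theorem rStirling1_eq_zero_of_lt {n k : ℕ} (h : n < k) : rStirling1 r n k = 0 := by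
  simp [rStirling1, Nat.sub_eq_zero_of_le h.le, stirling1_eq_stirlingFirst,
    stirlingFirst_eq_zero_of_lt h]

theorem rStirling2_eq_zero_of_lt {n k : ℕ} (h : n < k) : rStirling2 r n k = 0 := by
  simp [rStirling2, Icc_eq_empty_of_lt h]

theorem rStirling1_succ_succ (n k : ℕ) :
    rStirling1 r (n + 1) (k + 1) = (n + r) * rStirling1 r n (k + 1) + rStirling1 r n k := by
  have hpascal := sum_antidiagonal_choose_succ_mul (R := ℕ)
    (fun i l => r.ascFactorial i * stirlingFirst l (k + 1)) n
  simp only [Nat.cast_id] at hpascal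
  rw [rStirling1_eq_sum_antidiagonal, hpascal, rStirling1_eq_sum_antidiagonal,
    rStirling1_eq_sum_antidiagonal, mul_sum, ← sum_add_distrib, ← sum_add_distrib]
  refine sum_congr rfl fun ⟨i, l⟩ h => ?_
  rw [HasAntidiagonal.mem_antidiagonal] at h
  subst h
  rw [choose_symm_add, stirlingFirst_succ_succ, ascFactorial_succ]
  ring

theorem rStirling2_succ_succ (n k : ℕ) :
    rStirling2 r (n + 1) (k + 1) = (k + 1 + r) * rStirling2 r n (k + 1) + rStirling2 r n k := by
  have hpascal := sum_antidiagonal_choose_succ_mul (R := ℕ)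
    (fun i l => stirlingSecond i (k + 1) * r ^ l) n
  simp only [Nat.cast_id] at hpascal
  rw [rStirling2_eq_sum_antidiagonal, hpascal, rStirling2_eq_sum_antidiagonal,
    rStirling2_eq_sum_antidiagonal, mul_sum, ← sum_add_distrib, ← sum_add_distrib]
  refine sum_congr rfl fun ⟨i, l⟩ h => ?_
  rw [HasAntidiagonal.mem_antidiagonal] at h
  subst h
  rw [choose_symm_add, stirlingSecond_succ_succ, pow_succ]
  ring

end rStirling

def rStirlingProd (r n j : ℕ) : ℕ :=
  ∑ k ∈ range (n + 1), rStirling1 r n k * rStirling2 r k j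

/-- `rLah r n k` is the `r`-Lah number `L_r(n + r, k + r) = n! / k! * binom(n + 2r - 1, n - k)`. -/
def rLah (r n k : ℕ) : ℕ :=
  n.choose k * (k + 2 * r).ascFactorial (n - k)

section rLah

variable (r : ℕ)

theorem rStirlingProd_eq_add_sum_succ (n j : ℕ) :
    rStirlingProd r n j = rStirling1 r n 0 * rStirling2 r 0 j +
      ∑ k ∈ range (n + 1), rStirling1 r n (k + 1) * rStirling2 r (k + 1) j := by
  have hextend : rStirlingProd r n j =
      ∑ k ∈ range (n + 2), rStirling1 r n k * rStirling2 r k j := by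
    rw [sum_range_succ, rStirling1_eq_zero_of_lt r (lt_add_one n), zero_mul, add_zero,
      rStirlingProd]
  rw [hextend, sum_range_succ', add_comm]

theorem rStirlingProd_succ_zero (n : ℕ) :
    rStirlingProd r (n + 1) 0 = (n + 2 * r) * rStirlingProd r n 0 := by
  have hsplit : rStirlingProd r (n + 1) 0 =
      (r + n) * r.ascFactorial n + ∑ k ∈ range (n + 1),
        ((n + r) * (rStirling1 r n (k + 1) * rStirling2 r (k + 1) 0) +
          r * (rStirling1 r n k * rStirling2 r k 0)) := by
    rw [rStirlingProd, sum_range_succ', add_comm, rStirling1_zero_right, rStirling2_zero_right,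
      ascFactorial_succ, pow_zero, mul_one]
    congr 1
    refine sum_congr rfl fun k _ => ?_
    rw [rStirling1_succ_succ, rStirling2_zero_right, rStirling2_zero_right, pow_succ]
    ring
  rw [hsplit, sum_add_distrib, ← mul_sum, ← mul_sum, ← rStirlingProd]
  rw [rStirlingProd_eq_add_sum_succ r n 0, rStirling1_zero_right, rStirling2_zero_right,
    pow_zero, mul_one]
  ring

theorem rStirlingProd_succ_succ (n j : ℕ) :
    rStirlingProd r (n + 1) (j + 1) =
      (n + j + 1 + 2 * r) * rStirlingProd r n (j + 1) + rStirlingProd r n j := by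
  have hsplit : rStirlingProd r (n + 1) (j + 1) = ∑ k ∈ range (n + 1),
      ((n + r) * (rStirling1 r n (k + 1) * rStirling2 r (k + 1) (j + 1)) +
        ((j + 1 + r) * (rStirling1 r n k * rStirling2 r k (j + 1)) +
          rStirling1 r n k * rStirling2 r k j)) := by
    rw [rStirlingProd, sum_range_succ', rStirling2_eq_zero_of_lt r (succ_pos j), mul_zero,
      add_zero]
    refine sum_congr rfl fun k _ => ?_
    rw [rStirling1_succ_succ, rStirling2_succ_succ]
    ring
  have hshift := rStirlingProd_eq_add_sum_succ r n (j + 1)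
  rw [rStirling2_eq_zero_of_lt r (succ_pos j), mul_zero, zero_add] at hshift
  rw [hsplit, sum_add_distrib, sum_add_distrib, ← mul_sum, ← mul_sum, ← rStirlingProd,
    ← rStirlingProd, ← hshift]
  ring

theorem rLah_succ_zero (n : ℕ) : rLah r (n + 1) 0 = (n + 2 * r) * rLah r n 0 := by
  simp only [rLah, choose_zero_right, zero_add, Nat.sub_zero, ascFactorial_succ]
  ring

theorem rLah_succ_succ (n j : ℕ) :
    rLah r (n + 1) (j + 1) = (n + j + 1 + 2 * r) * rLah r n (j + 1) + rLah r n j := by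
  rcases lt_trichotomy j n with hjn | rfl | hnj
  · obtain ⟨m, rfl⟩ := Nat.exists_eq_add_of_lt hjn
    have hchoose := choose_succ_right_eq (j + m + 1) j
    have hasc :
        (j + 2 * r).ascFactorial (m + 1) = (j + 2 * r) * (j + 1 + 2 * r).ascFactorial m := by
      rw [ascFactorial_succ, ← succ_ascFactorial, succ_eq_add_one, add_right_comm]
    rw [show j + m + 1 - j = m + 1 by omega] at hchoose
    rw [rLah, rLah, rLah, show j + m + 1 + 1 - (j + 1) = m + 1 by omega,
      show j + m + 1 - (j + 1) = m by omega, show j + m + 1 - j = m + 1 by omega,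
      choose_succ_succ (j + m + 1) j, succ_eq_add_one, ascFactorial_succ, hasc]
    linear_combination (j + 1 + 2 * r).ascFactorial m * hchoose.symm
  · simp [rLah]
  · simp [rLah, choose_eq_zero_of_lt, hnj, hnj.trans (lt_add_one j)]

theorem rStirlingProd_eq_rLah : ∀ n j, rStirlingProd r n j = rLah r n j
  | 0, 0 => by simp [rStirlingProd, rLah, rStirling1_zero_right, rStirling2_zero_right]
  | 0, j + 1 => by simp [rStirlingProd, rLah, rStirling2_eq_zero_of_lt]
  | n + 1, 0 => by rw [rStirlingProd_succ_zero, rLah_succ_zero, rStirlingProd_eq_rLah n 0]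
  | n + 1, j + 1 => by
    rw [rStirlingProd_succ_succ, rLah_succ_succ, rStirlingProd_eq_rLah n j,
      rStirlingProd_eq_rLah n (j + 1)]

theorem cast_rLah {K : Type*} [Field K] [CharZero K] {n k : ℕ} (h : k ≤ n) :
    (rLah r n k : K) = n ! / k ! * (n + 2 * r - 1).choose (n - k) := by
  rw [rLah, ascFactorial_eq_factorial_mul_choose',
    show k + 2 * r + (n - k) - 1 = n + 2 * r - 1 by omega]
  push_cast
  have hfact : ((n - k)! : K) ≠ 0 := Nat.cast_ne_zero.2 (factorial_ne_zero _)
  rw [cast_choose K h]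
  field_simp

end rLah

theorem sum_rStirling_prod_general (n j b : ℕ) (hj : j ≤ n) :
    (∑ k ∈ Finset.range (n + 1), (rStirling1 b n k * rStirling2 b k j : ℚ)) =
      (n.factorial : ℚ) / (j.factorial : ℚ) * ((n + 2 * b - 1).choose (n - j) : ℚ) := by
  rw [← cast_rLah b hj, ← rStirlingProd_eq_rLah, rStirlingProd]
  push_cast
  rfl

theorem sum_rStirling_prod (n j b : ℕ) (hn : 1 ≤ n) (hj : j ≤ n) :
    (∑ k ∈ Finset.range (n + 1), (rStirling1 b n k * rStirling2 b k j : ℚ)) =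
      (n.factorial : ℚ) / (j.factorial : ℚ) * ((n + 2 * b - 1).choose (n - j) : ℚ) :=
  sum_rStirling_prod_general n j b hj
end

section
/- For d ≥ 1 and every m in {0,…,d}, let N = (N_1,…,N_d) be a standard Gaussian vector in ℝ^d. Then the convex cone W = {x ∈ ℝ^d : x_1 ≤ 0, x_1+x_2 ≤ 0, …, x_1+⋯+x_d ≤ 0} satisfies P(N ∈ W) = binom(2d, d) / 4^d. -/
/-!
Split a path of the walk `S_0 = 0, S_1, …, S_d` at the (almost surely unique) time `j` of its
maximum. The part after `j`, read from `S_j`, stays negative; the part before `j`, reversed in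
time and negated, also stays negative. Since the increments are i.i.d., symmetric and atomless,
the two parts are independent and distributed as walks of lengths `j` and `d - j`, so
`q_n := P(S_1, …, S_n < 0)` satisfies `∑_{j+k=n} q_j q_k = 1` with `q_0 = 1`. The numbers
`binom(2n,n)/4^n` satisfy the same recursion, which determines the sequence. Ties having
probability zero, `≤ 0` may replace `< 0`.
-/

open MeasureTheory ProbabilityTheory Finset
open scoped NNReal

theorem Nat.sum_antidiagonal_centralBinom_mul (n : ℕ) :
    ∑ p ∈ antidiagonal n, p.1.centralBinom * p.2.centralBinom = 4 ^ n := by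
  set A : ℕ → ℕ := fun n => ∑ p ∈ antidiagonal n, p.1.centralBinom * p.2.centralBinom
  set B : ℕ → ℕ := fun n =>
    ∑ p ∈ antidiagonal n, p.1 * (p.1.centralBinom * p.2.centralBinom)
  have hsymm : ∀ n, 2 * B n = n * A n := fun n => by
    calc 2 * B n
        = B n + ∑ p ∈ antidiagonal n, p.2 * (p.2.centralBinom * p.1.centralBinom) := by
          rw [two_mul, ← Nat.sum_antidiagonal_swap]; rfl
      _ = n * A n := by
          rw [← sum_add_distrib, mul_sum]
          refine sum_congr rfl fun p hp => ?_
          rw [← mem_antidiagonal.1 hp]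
          ring
  have hsucc : ∀ n, B (n + 1) = 4 * B n + 2 * A n := fun n => by
    simp only [B, A, Nat.sum_antidiagonal_succ, zero_mul, zero_add, mul_sum, ← sum_add_distrib]
    refine sum_congr rfl fun p _ => ?_
    rw [← mul_assoc, Nat.succ_mul_centralBinom_succ]
    ring
  induction n with
  | zero => simp
  | succ n ih =>
    refine Nat.eq_of_mul_eq_mul_left n.succ_pos ?_
    calc (n + 1) * A (n + 1) = 2 * B (n + 1) := (hsymm (n + 1)).symm
      _ = 4 * (2 * B n) + 4 * A n := by rw [hsucc]; ring
      _ = (n + 1) * 4 ^ (n + 1) := by rw [hsymm, show A n = 4 ^ n from ih]; ring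

theorem eq_of_sum_antidiagonal_mul_self_eq {R : Type*} [CommRing R] [IsDomain R] [CharZero R]
    {f g : ℕ → R} (hf : f 0 = 1) (hg : g 0 = 1)
    (h : ∀ n, ∑ p ∈ antidiagonal n, f p.1 * f p.2 = ∑ p ∈ antidiagonal n, g p.1 * g p.2) :
    f = g := by
  funext n
  induction n using Nat.strong_induction_on with
  | _ n ih =>
  cases n with
  | zero => rw [hf, hg]
  | succ n =>
  have hsum := sub_eq_zero.2 (h (n + 1))
  rw [← sum_sub_distrib, sum_eq_add (0, n + 1) (n + 1, 0) (by simp)] at hsum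
  · simp only [hf, hg] at hsum
    have : (2 : R) * (f (n + 1) - g (n + 1)) = 0 := by linear_combination hsum
    exact sub_eq_zero.1 ((mul_eq_zero.1 this).resolve_left two_ne_zero)
  · rintro ⟨i, j⟩ hij hne
    rw [HasAntidiagonal.mem_antidiagonal] at hij
    simp only [ne_eq, Prod.mk.injEq] at hne
    rw [ih i (by omega), ih j (by omega), sub_self]
  all_goals simp

theorem measure_prod_setOf_fst_eq_null {α : Type*} [MeasurableSpace α] (μ : Measure ℝ)
    [SFinite μ] [NullSingletonClass μ] (ν : Measure α) [SFinite ν] {g : α → ℝ}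
    (hg : Measurable g) : μ.prod ν {p | p.1 = g p.2} = 0 := by
  have hmeas : MeasurableSet {p : ℝ × α | p.1 = g p.2} :=
    measurableSet_eq_fun measurable_fst (hg.comp measurable_snd)
  rw [Measure.prod_apply_symm hmeas]
  simp [Set.preimage]

theorem measure_pi_setOf_sum_eq_null {n : ℕ} (μ : Measure ℝ) [SigmaFinite μ]
    [NullSingletonClass μ] {s : Finset (Fin n)} (hs : s.Nonempty) (c : ℝ) :
    Measure.pi (fun _ => μ) {x | ∑ i ∈ s, x i = c} = 0 := by
  obtain ⟨i₀, hi₀⟩ := hs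
  cases n with
  | zero => exact i₀.elim0
  | succ m =>
  set G : (Fin m → ℝ) → ℝ := fun w =>
    ∑ i ∈ s.erase i₀, Fin.insertNth (α := fun _ => ℝ) i₀ 0 w i
  have hG : Measurable G := Finset.measurable_sum _ fun i _ => by fun_prop
  have hsum : ∀ x : Fin (m + 1) → ℝ, ∑ i ∈ s, x i = x i₀ + G (i₀.removeNth x) := by
    intro x
    rw [← add_sum_erase s _ hi₀]
    congr 1
    refine sum_congr rfl fun i hi => ?_
    obtain ⟨j, rfl⟩ := Fin.exists_succAbove_eq (ne_of_mem_erase hi)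
    simp [Fin.removeNth]
  have hpre : {x : Fin (m + 1) → ℝ | ∑ i ∈ s, x i = c} =
      MeasurableEquiv.piFinSuccAbove (fun _ => ℝ) i₀ ⁻¹' {p | p.1 = c - G p.2} := by
    ext x
    simp [hsum, eq_sub_iff_add_eq]
  have hmeas : MeasurableSet {p : ℝ × (Fin m → ℝ) | p.1 = c - G p.2} :=
    measurableSet_eq_fun measurable_fst (measurable_const.sub (hG.comp measurable_snd))
  rw [hpre, (measurePreserving_piFinSuccAbove (fun _ => μ) i₀).measure_preimage
    hmeas.nullMeasurableSet]
  exact measure_prod_setOf_fst_eq_null μ _ (measurable_const.sub hG)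

theorem measurePreserving_finAddSplit (μ : Measure ℝ) [SigmaFinite μ] (a b : ℕ) :
    MeasurePreserving
      (fun x : Fin (a + b) → ℝ => (fun i => x (Fin.castAdd b i), fun i => x (Fin.natAdd a i)))
      (Measure.pi fun _ => μ) ((Measure.pi fun _ => μ).prod (Measure.pi fun _ => μ)) :=
  (measurePreserving_sumPiEquivProdPi _).comp (measurePreserving_piCongrLeft _ finSumFinEquiv).symm

namespace SparreAndersen

def walk {n : ℕ} (x : Fin n → ℝ) (k : ℕ) : ℝ := ∑ i : Fin n with i.val < k, x i

variable {n : ℕ}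

lemma measurable_walk (k : ℕ) : Measurable fun x : Fin n → ℝ => walk x k :=
  Finset.measurable_sum _ fun i _ => measurable_pi_apply i

@[simp] lemma walk_zero (x : Fin n → ℝ) : walk x 0 = 0 := by simp [walk]

lemma walk_of_le (x : Fin n → ℝ) {k : ℕ} (hk : n ≤ k) : walk x k = walk x n := by
  simp only [walk]
  congr 1
  ext i
  simp only [mem_filter, mem_univ, true_and]
  omega

lemma walk_sub_walk (x : Fin n → ℝ) {k l : ℕ} (hkl : k ≤ l) :
    walk x l - walk x k = ∑ i : Fin n with k ≤ i.val ∧ i.val < l, x i := by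
  rw [walk, walk, sub_eq_iff_eq_add,
    ← sum_filter_add_sum_filter_not _ (fun i : Fin n => k ≤ i.val)]
  simp only [filter_filter, not_le]
  congr 2 <;> ext i <;> simp only [mem_filter, mem_univ, true_and] <;> omega

lemma walk_append {a b : ℕ} (y : Fin a → ℝ) (z : Fin b → ℝ) (k : ℕ) :
    walk (Fin.append y z) k = walk y k + walk z (k - a) := by
  simp only [walk, sum_filter, Fin.sum_univ_add, Fin.append_left, Fin.append_right,
    Fin.val_castAdd, Fin.val_natAdd]
  congr 1
  refine sum_congr rfl fun i _ => ?_
  congr 1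
  simp only [eq_iff_iff]; omega

lemma sum_Iic_eq_walk (x : Fin n → ℝ) (m : Fin n) : ∑ i ∈ Iic m, x i = walk x (m + 1) := by
  rw [walk]
  congr 1
  ext i
  simp only [mem_Iic, mem_filter, mem_univ, true_and, Fin.le_def]
  omega

def reflect (y : Fin n → ℝ) : Fin n → ℝ := fun i => -y i.rev

lemma walk_reflect (y : Fin n → ℝ) {m : ℕ} (hm : m ≤ n) :
    walk (reflect y) m = walk y (n - m) - walk y n := by
  rw [← neg_sub, walk_sub_walk y (Nat.sub_le n m), walk]
  simp only [reflect, sum_neg_distrib]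
  congr 1
  refine sum_equiv Fin.revPerm (fun i => ?_) (fun i _ => rfl)
  simp only [mem_filter, mem_univ, true_and, Fin.revPerm_apply, Fin.val_rev]
  omega

lemma measurePreserving_reflect (μ : Measure ℝ) [SigmaFinite μ] [μ.IsNegInvariant] :
    MeasurePreserving (reflect (n := n)) (Measure.pi fun _ => μ) (Measure.pi fun _ => μ) := by
  have hrev := measurePreserving_piCongrLeft (fun _ : Fin n => μ) Fin.revPerm
  convert (Measure.measurePreserving_neg _).comp hrev using 1
  ext x i
  obtain ⟨j, rfl⟩ := Fin.revPerm.surjective i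
  have := MeasurableEquiv.piCongrLeft_apply_apply (β := fun _ => ℝ) Fin.revPerm x j
  simp only [Fin.revPerm_apply] at this
  simp [reflect, this]

lemma ae_injOn_walk (μ : Measure ℝ) [SigmaFinite μ] [NullSingletonClass μ] :
    ∀ᵐ x ∂Measure.pi (fun _ : Fin n => μ), Set.InjOn (walk x) (Set.Iic n) := by
  have hties : ∀ k l, k < l → l ≤ n →
      ∀ᵐ x ∂Measure.pi (fun _ : Fin n => μ), walk x k ≠ walk x l := by
    intro k l hkl hl
    have hne : (univ.filter fun i : Fin n => k ≤ i.val ∧ i.val < l).Nonempty :=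
      ⟨⟨k, by omega⟩, by simp [hkl]⟩
    refine measure_eq_zero_iff_ae_notMem.1 (measure_mono_null (fun x hx => ?_)
      (measure_pi_setOf_sum_eq_null μ hne 0))
    exact (walk_sub_walk x hkl.le).symm.trans (sub_eq_zero.2 hx.symm)
  simp only [← Filter.eventually_imp_distrib_left, ← ae_all_iff] at hties
  filter_upwards [hties] with x hx k hk l hl heq
  by_contra hkl
  rcases Nat.lt_or_gt_of_ne hkl with h | h
  · exact hx k l h hl heq
  · exact hx l k h hk heq.symm

def staysNeg (n : ℕ) : Set (Fin n → ℝ) := {x | ∀ k, 0 < k → k ≤ n → walk x k < 0}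

def argmaxAt (n j : ℕ) : Set (Fin n → ℝ) := {x | ∀ k ≤ n, k ≠ j → walk x k < walk x j}

lemma measurableSet_staysNeg (n : ℕ) : MeasurableSet (staysNeg n) :=
  measurableSet_setOfPred.2 <| .forall fun k => .forall fun _ => .forall fun _ =>
    measurableSet_setOfPred.1 (measurableSet_lt (measurable_walk k) measurable_const)

lemma measurableSet_argmaxAt (n j : ℕ) : MeasurableSet (argmaxAt n j) :=
  measurableSet_setOfPred.2 <| .forall fun k => .forall fun _ => .forall fun _ =>
    measurableSet_setOfPred.1 (measurableSet_lt (measurable_walk k) (measurable_walk j))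

lemma reflect_mem_staysNeg_iff (y : Fin n → ℝ) :
    reflect y ∈ staysNeg n ↔ ∀ k < n, walk y k < walk y n := by
  refine ⟨fun h k hk => ?_, fun h m hm hmn => ?_⟩
  · have := h (n - k) (by omega) (by omega)
    rwa [walk_reflect y (by omega), Nat.sub_sub_self hk.le, sub_neg] at this
  · rw [walk_reflect y hmn, sub_neg]
    exact h _ (by omega)

lemma append_mem_argmaxAt_iff {a b : ℕ} (y : Fin a → ℝ) (z : Fin b → ℝ) :
    Fin.append y z ∈ argmaxAt (a + b) a ↔ reflect y ∈ staysNeg a ∧ z ∈ staysNeg b := by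
  rw [reflect_mem_staysNeg_iff]
  simp only [argmaxAt, staysNeg, Set.mem_ofPred_eq, walk_append, Nat.sub_self, walk_zero,
    add_zero]
  refine ⟨fun h => ⟨fun k hk => ?_, fun l hl hlb => ?_⟩, fun ⟨hy, hz⟩ k hk hka => ?_⟩
  · simpa [Nat.sub_eq_zero_of_le hk.le] using h k (by omega) hk.ne
  · simpa [walk_of_le y (Nat.le_add_right a l)] using h (a + l) (by omega) (by omega)
  · rcases Nat.lt_or_gt_of_ne hka with hk' | hk'
    · simpa [Nat.sub_eq_zero_of_le hk'.le] using hy k hk'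
    · simpa [walk_of_le y hk'.le] using hz (k - a) (by omega) (by omega)

lemma measure_argmaxAt_add (μ : Measure ℝ) [SigmaFinite μ] [μ.IsNegInvariant] (a b : ℕ) :
    Measure.pi (fun _ => μ) (argmaxAt (a + b) a) =
      Measure.pi (fun _ => μ) (staysNeg a) * Measure.pi (fun _ => μ) (staysNeg b) := by
  have hpre : argmaxAt (a + b) a =
      (fun x : Fin (a + b) → ℝ => (fun i => x (Fin.castAdd b i), fun i => x (Fin.natAdd a i)))
        ⁻¹' ((reflect ⁻¹' staysNeg a) ×ˢ staysNeg b) := by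
    ext x
    have := append_mem_argmaxAt_iff (fun i => x (Fin.castAdd b i)) (fun i => x (Fin.natAdd a i))
    rwa [Fin.append_castAdd_natAdd] at this
  have hmeas := (measurableSet_staysNeg a).preimage (measurePreserving_reflect μ).measurable
  rw [hpre, (measurePreserving_finAddSplit μ a b).measure_preimage
    (hmeas.prod (measurableSet_staysNeg b)).nullMeasurableSet, Measure.prod_prod,
    (measurePreserving_reflect μ).measure_preimage (measurableSet_staysNeg a).nullMeasurableSet]

lemma sum_measure_argmaxAt (μ : Measure ℝ) [IsProbabilityMeasure μ] [NullSingletonClass μ]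
    (n : ℕ) : ∑ j ∈ range (n + 1), Measure.pi (fun _ => μ) (argmaxAt n j) = 1 := by
  have hdisj : Set.PairwiseDisjoint ↑(range (n + 1)) (argmaxAt n) := by
    intro j hj j' hj' hne
    rw [coe_range, Set.mem_Iio] at hj hj'
    exact Set.disjoint_left.2 fun x hx hx' =>
      lt_asymm (hx j' (by omega) hne.symm) (hx' j (by omega) hne)
  rw [← measure_biUnion_finset hdisj fun j _ => measurableSet_argmaxAt n j,
    ← prob_compl_eq_zero_iff (measurableSet_biUnion _ fun j _ => measurableSet_argmaxAt n j),
    measure_eq_zero_iff_ae_notMem]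
  filter_upwards [ae_injOn_walk μ] with x hx
  obtain ⟨j, hj, hmax⟩ := exists_max_image (range (n + 1)) (walk x) ⟨0, by simp⟩
  rw [mem_range] at hj
  refine not_not_intro (Set.mem_biUnion (mem_range.2 hj) fun k hk hkj => ?_)
  exact (hmax k (mem_range.2 (by omega))).lt_of_ne fun h =>
    hkj (hx (Set.mem_Iic.2 hk) (Set.mem_Iic.2 (by omega)) h)

lemma measure_walk_nonpos_eq_staysNeg (μ : Measure ℝ) [SigmaFinite μ] [NullSingletonClass μ]
    (n : ℕ) :
    Measure.pi (fun _ => μ) {x : Fin n → ℝ | ∀ k, 0 < k → k ≤ n → walk x k ≤ 0} =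
      Measure.pi (fun _ => μ) (staysNeg n) := by
  refine measure_congr <| (ae_injOn_walk μ).mono fun x hx => propext ?_
  refine ⟨fun h k hk hkn => (h k hk hkn).lt_of_ne fun h0 => hk.ne ?_,
    fun h k hk hkn => (h k hk hkn).le⟩
  exact hx (Set.mem_Iic.2 (Nat.zero_le n)) (Set.mem_Iic.2 hkn) (by rw [walk_zero, h0])

lemma sum_antidiagonal_measure_staysNeg_mul (μ : Measure ℝ) [IsProbabilityMeasure μ]
    [NullSingletonClass μ] [μ.IsNegInvariant] (n : ℕ) :
    ∑ p ∈ antidiagonal n,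
      Measure.pi (fun _ => μ) (staysNeg p.1) * Measure.pi (fun _ => μ) (staysNeg p.2) = 1 := by
  rw [← sum_measure_argmaxAt μ n, Nat.sum_antidiagonal_eq_sum_range_succ_mk]
  refine sum_congr rfl fun j hj => ?_
  obtain ⟨b, rfl⟩ := Nat.exists_eq_add_of_le (Nat.lt_succ_iff.1 (mem_range.1 hj))
  rw [Nat.add_sub_cancel_left, measure_argmaxAt_add]

lemma measure_staysNeg_zero (μ : Measure ℝ) [IsProbabilityMeasure μ] :
    Measure.pi (fun _ => μ) (staysNeg 0) = 1 := by
  rw [show staysNeg 0 = Set.univ from Set.eq_univ_of_forall fun _ k hk hk0 => by omega,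
    measure_univ]

theorem measure_walk_nonpos (μ : Measure ℝ) [IsProbabilityMeasure μ] [NullSingletonClass μ]
    [μ.IsNegInvariant] (n : ℕ) :
    Measure.pi (fun _ => μ) {x : Fin n → ℝ | ∀ k, 0 < k → k ≤ n → walk x k ≤ 0} =
      n.centralBinom / 4 ^ n := by
  set q : ℕ → ℝ := fun n => (Measure.pi (fun _ => μ) (staysNeg n)).toReal
  have hq : ∀ n, ∑ p ∈ antidiagonal n, q p.1 * q p.2 = 1 := fun n => by
    simp only [q, ← ENNReal.toReal_mul]
    rw [← ENNReal.toReal_sum fun _ _ => by finiteness, sum_antidiagonal_measure_staysNeg_mul,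
      ENNReal.toReal_one]
  have hbinom : ∀ n, ∑ p ∈ antidiagonal n,
      (p.1.centralBinom / 4 ^ p.1 : ℝ) * (p.2.centralBinom / 4 ^ p.2) = 1 := fun n => by
    rw [sum_congr rfl fun p hp => by
        rw [div_mul_div_comm, ← pow_add, HasAntidiagonal.mem_antidiagonal.1 hp],
      ← sum_div, div_eq_one_iff_eq (by positivity)]
    exact_mod_cast Nat.sum_antidiagonal_centralBinom_mul n
  have hqn := congr_fun (eq_of_sum_antidiagonal_mul_self_eq (f := q)
    (g := fun n => (n.centralBinom / 4 ^ n : ℝ)) (by simp [q, measure_staysNeg_zero])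
    (by simp) fun n => (hq n).trans (hbinom n).symm) n
  rw [measure_walk_nonpos_eq_staysNeg, ← ENNReal.ofReal_toReal (measure_ne_top _ _)]
  change ENNReal.ofReal (q n) = _
  rw [hqn, ENNReal.ofReal_div_of_pos (by positivity), ENNReal.ofReal_natCast,
    ENNReal.ofReal_pow zero_le_four, ENNReal.ofReal_ofNat]

end SparreAndersen

instance isNegInvariant_gaussianReal (v : ℝ≥0) : (gaussianReal 0 v).IsNegInvariant :=
  ⟨by simpa [Measure.neg_def] using gaussianReal_map_neg (μ := 0) (v := v)⟩

theorem gaussian_walk_stays_nonpositive_general (d : ℕ) :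
    (Measure.pi fun _ : Fin d => gaussianReal 0 1)
        {x : Fin d → ℝ | ∀ m : Fin d, ∑ i ∈ Finset.Iic m, x i ≤ 0} =
      (((2 * d).choose d : ENNReal)) / 4 ^ d := by
  have := nullSingletonClass_gaussianReal (μ := 0) one_ne_zero
  have hset : {x : Fin d → ℝ | ∀ m : Fin d, ∑ i ∈ Finset.Iic m, x i ≤ 0} =
      {x | ∀ k, 0 < k → k ≤ d → SparreAndersen.walk x k ≤ 0} := by
    ext x
    simp only [Set.mem_ofPred_eq, SparreAndersen.sum_Iic_eq_walk]
    exact ⟨fun h k hk hkd => by simpa [Nat.sub_add_cancel hk] using h ⟨k - 1, by omega⟩,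
      fun h m => h _ m.val.succ_pos m.isLt⟩
  rw [hset, SparreAndersen.measure_walk_nonpos, Nat.centralBinom_eq_two_mul_choose]

/-- Sparre Andersen's formula: if `N = (N_1,…,N_d)` is a standard Gaussian vector in `ℝ^d`,
then the probability that all partial sums `N_1 + ⋯ + N_m`, `m = 1,…,d`, are nonpositive
equals `binom(2d,d)/4^d`. -/
theorem gaussian_walk_stays_nonpositive (d : ℕ) (hd : 1 ≤ d) :
    (Measure.pi fun _ : Fin d => gaussianReal 0 1)
        {x : Fin d → ℝ | ∀ m : Fin d, ∑ i ∈ Finset.Iic m, x i ≤ 0} =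
      (((2 * d).choose d : ENNReal)) / 4 ^ d :=
  gaussian_walk_stays_nonpositive_general d
end

section
/- For every n ≥ 1 and every j,k ∈ {0,…,n}, the sum over l_1,…,l_j ∈ ℕ_{≥1} with l_1+⋯+l_j = n of the coefficient of t^k in the polynomial (t^{(l_1)}/l_1!)⋯(t^{(l_j)}/l_j!) equals (j!/n!) · c(n,k) · S(k,j), where t^{(l)} is the rising factorial, c is the unsigned Stirling number of the first kind and S is the Stirling number of the second kind. -/
open Polynomial Finset

lemma stirling1_zero_right (n : ℕ) : stirling1 n 0 = if n = 0 then 1 else 0 := by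
  cases n <;> simp [stirling1]

lemma stirling1_eq_zero : ∀ {n k : ℕ}, n < k → stirling1 n k = 0 := by
  intro n
  induction n with
  | zero => intro k h; cases k with
    | zero => omega
    | succ k => simp [stirling1]
  | succ n ih =>
    intro k h
    cases k with
    | zero => omega
    | succ k =>
      simp only [stirling1]
      rw [ih (by omega), ih (by omega)]
      simp

lemma asc_eval {R : Type*} [CommSemiring R] (u : R) (n : ℕ) :
    ∏ m ∈ range n, (u + (m : R)) = ∑ k ∈ range (n + 1), (stirling1 n k : R) * u ^ k := by
  induction n with
  | zero => simp [stirling1]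
  | succ n ih =>
    rw [prod_range_succ, ih, mul_add, Finset.sum_mul, Finset.sum_mul]
    have h1 : ∑ k ∈ range (n + 1), (stirling1 n k : R) * u ^ k * u
        = ∑ k ∈ range (n + 1), (stirling1 n k : R) * u ^ (k + 1) := by
      apply Finset.sum_congr rfl; intro k _; ring
    have h2 : ∑ k ∈ range (n + 1), (stirling1 n k : R) * u ^ k * (n : R)
        = ∑ k ∈ range (n + 1), ((n * stirling1 n k : ℕ) : R) * u ^ k := by
      apply Finset.sum_congr rfl; intro k _; push_cast; ring
    rw [h1, h2]
    rw [Finset.sum_range_succ' (fun k => (stirling1 (n+1) k : R) * u ^ k) (n + 1)]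
    have h3 : ∀ k, stirling1 (n + 1) (k + 1) = n * stirling1 n (k + 1) + stirling1 n k := by
      intro k; rfl
    have h4 : (stirling1 (n + 1) 0 : R) * u ^ 0 = 0 := by
      simp [stirling1_zero_right]
    rw [h4, add_zero]
    have h5 : ∑ k ∈ range (n + 1), ((n * stirling1 n k : ℕ) : R) * u ^ k
        = ∑ k ∈ range (n + 1), ((n * stirling1 n (k + 1) : ℕ) : R) * u ^ (k+1) := by
      rw [Finset.sum_range_succ' (fun k => ((n * stirling1 n k : ℕ) : R) * u ^ k) n]
      rw [Finset.sum_range_succ (fun k => ((n * stirling1 n (k+1) : ℕ) : R) * u ^ (k+1)) n]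
      rw [stirling1_eq_zero (Nat.lt_succ_self n)]
      cases n <;> simp [stirling1]
    rw [h5, ← Finset.sum_add_distrib]
    apply Finset.sum_congr rfl
    intro k _
    rw [h3]
    push_cast
    ring

lemma sum_antidiagonalTuple_succ {M : Type*} [AddCommMonoid M] (j n : ℕ)
    (F : (Fin (j + 1) → ℕ) → M) :
    ∑ l ∈ Finset.Nat.antidiagonalTuple (j + 1) n, F l
      = ∑ ab ∈ Finset.HasAntidiagonal.antidiagonal n, ∑ m ∈ Finset.Nat.antidiagonalTuple j ab.2,
          F (Fin.cons ab.1 m) := by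
  rw [Finset.sum_sigma']
  refine Finset.sum_nbij' (fun l => ⟨(l 0, n - l 0), Fin.tail l⟩)
    (fun x => Fin.cons x.1.1 x.2) ?_ ?_ ?_ ?_ ?_
  · intro l hl
    have hs : ∑ i, l i = n := Finset.Nat.mem_antidiagonalTuple.mp hl
    rw [Fin.sum_univ_succ] at hs
    have h2 : ∑ i : Fin j, Fin.tail l i = n - l 0 := by
      unfold Fin.tail
      omega
    rw [Finset.mem_sigma]
    constructor
    · rw [Finset.HasAntidiagonal.mem_antidiagonal]
      show l 0 + (n - l 0) = n
      omega
    · show Fin.tail l ∈ Finset.Nat.antidiagonalTuple j (n - l 0)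
      exact Finset.Nat.mem_antidiagonalTuple.mpr h2
  · rintro ⟨⟨a, b⟩, m⟩ hx
    rw [Finset.mem_sigma] at hx
    have h1 : a + b = n := Finset.HasAntidiagonal.mem_antidiagonal.mp hx.1
    have h2 : ∑ i, m i = b := Finset.Nat.mem_antidiagonalTuple.mp hx.2
    refine Finset.Nat.mem_antidiagonalTuple.mpr ?_
    rw [Fin.sum_univ_succ]
    simp [h2, h1]
  · intro l hl
    simp [Fin.cons_self_tail]
  · rintro ⟨⟨a, b⟩, m⟩ hx
    rw [Finset.mem_sigma] at hx
    have h1 : a + b = n := Finset.HasAntidiagonal.mem_antidiagonal.mp hx.1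
    have hb : b = n - a := by omega
    subst hb
    simp [Fin.tail_cons]
  · intro l hl
    simp [Fin.cons_self_tail]

lemma coeff_asc {R : Type*} [CommSemiring R] (l q : ℕ) :
    (∏ m ∈ range l, (X + (m : R[X]))).coeff q = (stirling1 l q : R) := by
  have := asc_eval (X : R[X]) l
  rw [this, Polynomial.finset_sum_coeff]
  have : ∀ k ∈ range (l + 1),
      ((stirling1 l k : R[X]) * X ^ k).coeff q = if k = q then (stirling1 l k : R) else 0 := by
    intro k _
    rw [← Polynomial.C_eq_natCast, Polynomial.coeff_C_mul, Polynomial.coeff_X_pow]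
    split <;> simp_all [eq_comm]
  rw [Finset.sum_congr rfl this, Finset.sum_ite_eq' (range (l+1)) q]
  by_cases h : q ≤ l
  · simp [Nat.lt_succ_of_le h]
  · simp [stirling1_eq_zero (show l < q by omega), h]

lemma asc_add_mul {R : Type*} [CommSemiring R] (x y : R) (n : ℕ) :
    ∏ m ∈ range n, (x + y + (m : R)) =
      ∑ ab ∈ Finset.HasAntidiagonal.antidiagonal n, (n.choose ab.1 : R) *
        ((∏ m ∈ range ab.1, (x + (m : R))) * (∏ m ∈ range ab.2, (y + (m : R)))) := by
  induction n with
  | zero => simp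
  | succ n ih =>
    rw [prod_range_succ, ih, Finset.sum_mul]
    rw [Finset.sum_antidiagonal_choose_succ_mul
      (fun a b => (∏ m ∈ range a, (x + (m : R))) * (∏ m ∈ range b, (y + (m : R)))) n]
    have key : ∀ ab ∈ Finset.HasAntidiagonal.antidiagonal n,
        (n.choose ab.1 : R) * ((∏ m ∈ range ab.1, (x + (m:R))) * ∏ m ∈ range ab.2, (y + (m:R)))
          * (x + y + (n : R))
        = (n.choose ab.1 : R) * ((∏ m ∈ range ab.1, (x + (m:R))) *
            ∏ m ∈ range (ab.2 + 1), (y + (m:R)))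
          + (n.choose ab.2 : R) * ((∏ m ∈ range (ab.1 + 1), (x + (m:R))) *
            ∏ m ∈ range ab.2, (y + (m:R))) := by
      intro ab hab
      have hsum : ab.1 + ab.2 = n := Finset.HasAntidiagonal.mem_antidiagonal.mp hab
      have hch : n.choose ab.2 = n.choose ab.1 := by
        have h1 : ab.2 = n - ab.1 := by omega
        rw [h1, Nat.choose_symm (by omega)]
      have hxy : (x + y + (n : R)) = (x + (ab.1 : R)) + (y + (ab.2 : R)) := by
        rw [← hsum]; push_cast; ring
      rw [hch, prod_range_succ, prod_range_succ, hxy]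
      ring
    rw [Finset.sum_congr rfl key, Finset.sum_add_distrib]

lemma stirling1_conv (n p q : ℕ) :
    ∑ ab ∈ Finset.HasAntidiagonal.antidiagonal n, (n.choose ab.1 * stirling1 ab.1 p * stirling1 ab.2 q : ℚ)
      = ((p + q).choose q : ℚ) * stirling1 n (p + q) := by
  have E := (asc_add_mul (C (X : ℚ[X])) (X : (ℚ[X])[X]) n).symm.trans
    (asc_eval (C (X : ℚ[X]) + (X : (ℚ[X])[X])) n)
  have E2 := congrArg (fun f => (Polynomial.coeff f q).coeff p) E
  -- compute LHS of E2
  have hL : ((∑ ab ∈ Finset.HasAntidiagonal.antidiagonal n, ((n.choose ab.1 : (ℚ[X])[X]) *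
      ((∏ m ∈ range ab.1, (C (X : ℚ[X]) + (m : (ℚ[X])[X]))) *
        (∏ m ∈ range ab.2, ((X : (ℚ[X])[X]) + (m : (ℚ[X])[X])))))).coeff q).coeff p
      = ∑ ab ∈ Finset.HasAntidiagonal.antidiagonal n,
          (n.choose ab.1 * stirling1 ab.1 p * stirling1 ab.2 q : ℚ) := by
    rw [Polynomial.finset_sum_coeff, Polynomial.finset_sum_coeff]
    apply Finset.sum_congr rfl
    intro ab _
    have hx : (∏ m ∈ range ab.1, (C (X : ℚ[X]) + (m : (ℚ[X])[X])))
        = C (∏ m ∈ range ab.1, ((X : ℚ[X]) + (m : ℚ[X]))) := by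
      rw [map_prod]
      apply Finset.prod_congr rfl
      intro m _
      rw [map_add, map_natCast]
    have hc : (n.choose ab.1 : (ℚ[X])[X]) = C ((n.choose ab.1 : ℚ[X])) := by
      rw [map_natCast]
    rw [hx, hc, Polynomial.coeff_C_mul, Polynomial.coeff_C_mul, coeff_asc]
    have hre : ∀ (a b : ℕ) (f : ℚ[X]), (a : ℚ[X]) * (f * ((b : ℕ) : ℚ[X])) =
        C ((a * b : ℕ) : ℚ) * f := by
      intro a b f
      push_cast [← Polynomial.C_eq_natCast]
      rw [map_mul]; ring
    rw [hre, Polynomial.coeff_C_mul, coeff_asc]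
    push_cast
    ring
  -- compute RHS of E2
  have hR : ((∑ k ∈ range (n + 1), ((stirling1 n k : (ℚ[X])[X]) *
      (C (X : ℚ[X]) + (X : (ℚ[X])[X])) ^ k)).coeff q).coeff p
      = ((p + q).choose q : ℚ) * stirling1 n (p + q) := by
    rw [Polynomial.finset_sum_coeff, Polynomial.finset_sum_coeff]
    have hterm : ∀ k ∈ range (n + 1),
        (((stirling1 n k : (ℚ[X])[X]) * (C (X : ℚ[X]) + (X : (ℚ[X])[X])) ^ k).coeff q).coeff p
        = if k = p + q then ((p + q).choose q : ℚ) * stirling1 n (p + q) else 0 := by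
      intro k _
      rw [show (C (X : ℚ[X]) + (X : (ℚ[X])[X])) = ((X : (ℚ[X])[X]) + C (X : ℚ[X])) from add_comm _ _,
        show (stirling1 n k : (ℚ[X])[X]) = C ((stirling1 n k : ℚ[X])) from (map_natCast _ _).symm,
        Polynomial.coeff_C_mul, Polynomial.coeff_X_add_C_pow]
      rw [show ((stirling1 n k : ℚ[X]) * ((X : ℚ[X]) ^ (k - q) * (k.choose q : ℚ[X])))
          = C ((stirling1 n k * k.choose q : ℕ) : ℚ) * (X : ℚ[X]) ^ (k - q) by
        push_cast [← Polynomial.C_eq_natCast]; rw [map_mul]; ring]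
      rw [Polynomial.coeff_C_mul, Polynomial.coeff_X_pow]
      by_cases hk : k = p + q
      · subst hk
        simp [Nat.add_sub_cancel, mul_comm]
      · by_cases hq : q ≤ k
        · have : p ≠ k - q := by omega
          simp [this, hk]
        · have : k.choose q = 0 := Nat.choose_eq_zero_of_lt (by omega)
          simp [this, hk]
    rw [Finset.sum_congr rfl hterm, Finset.sum_ite_eq' (range (n+1)) (p+q)]
    by_cases h : p + q ≤ n
    · simp [Nat.lt_succ_of_le h]
    · simp [stirling1_eq_zero (show n < p + q by omega), h]
  rw [hL, hR] at E2
  exact E2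

lemma stirling2_sum (k : ℕ) : ∀ j : ℕ,
    ∑ m ∈ range (k + 1), k.choose m * stirling2 m j = stirling2 (k + 1) (j + 1) := by
  induction k with
  | zero => intro j; cases j <;> simp [stirling2]
  | succ k ih =>
    intro j
    rw [Finset.sum_range_succ' (fun m => (k+1).choose m * stirling2 m j) (k + 1)]
    have h1 : ∀ i, (k+1).choose (i+1) = k.choose i + k.choose (i+1) := fun i => rfl
    have e1 : ∑ i ∈ range (k + 1), (k+1).choose (i+1) * stirling2 (i+1) j
        = ∑ i ∈ range (k + 1), k.choose i * stirling2 (i+1) j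
          + ∑ i ∈ range (k + 1), k.choose (i+1) * stirling2 (i+1) j := by
      rw [← Finset.sum_add_distrib]
      apply Finset.sum_congr rfl
      intro i _
      rw [h1, add_mul]
    have e2 : ∑ i ∈ range (k + 1), k.choose (i+1) * stirling2 (i+1) j
          + (k+1).choose 0 * stirling2 0 j
        = stirling2 (k + 1) (j + 1) := by
      have := Finset.sum_range_succ' (fun m => k.choose m * stirling2 m j) (k + 1)
      rw [Finset.sum_range_succ, Nat.choose_succ_self, zero_mul, add_zero, ih] at this
      simpa using this.symm
    rw [e1, add_assoc, e2]
    cases j with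
    | zero =>
      have : ∀ i, stirling2 (i+1) 0 = 0 := fun i => rfl
      simp only [this, mul_zero, Finset.sum_const_zero, zero_add]
      show stirling2 (k+1) 1 = stirling2 (k+2) 1
      show stirling2 (k+1) 1 = 1 * stirling2 (k+1) 1 + stirling2 (k+1) 0
      simp [stirling2]
    | succ j' =>
      have hA : ∑ i ∈ range (k + 1), k.choose i * stirling2 (i+1) (j'+1)
          = (j'+1) * stirling2 (k+1) (j'+2) + stirling2 (k+1) (j'+1) := by
        have step : ∀ i ∈ range (k+1), k.choose i * stirling2 (i+1) (j'+1)
            = (j'+1) * (k.choose i * stirling2 i (j'+1)) + k.choose i * stirling2 i j' := by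
          intro i _
          show k.choose i * ((j'+1) * stirling2 i (j'+1) + stirling2 i j') = _
          ring
        rw [Finset.sum_congr rfl step, Finset.sum_add_distrib, ← Finset.mul_sum, ih, ih]
      rw [hA]
      show _ = stirling2 (k+2) (j'+2)
      show _ = (j'+2) * stirling2 (k+1) (j'+2) + stirling2 (k+1) (j'+1)
      ring

noncomputable def gp (l : ℕ) : Polynomial ℚ :=
  if l = 0 then 0 else Polynomial.C ((l.factorial : ℚ)⁻¹) * ∏ m ∈ range l, (X + (m : ℚ[X]))

lemma gp_coeff (l p : ℕ) :
    (gp l).coeff p = if l = 0 then 0 else ((l.factorial : ℚ))⁻¹ * stirling1 l p := by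
  unfold gp
  split
  · simp
  · rw [Polynomial.coeff_C_mul, coeff_asc]

lemma main_identity (j : ℕ) : ∀ n k : ℕ,
    (∑ l ∈ Finset.Nat.antidiagonalTuple j n, ∏ i, gp (l i)).coeff k
      = (j.factorial : ℚ) / n.factorial * stirling1 n k * stirling2 k j := by
  induction j with
  | zero =>
    intro n k
    cases n with
    | zero =>
      rw [Finset.Nat.antidiagonalTuple_zero_zero]
      cases k <;> simp [stirling1, stirling2, Polynomial.coeff_one]
    | succ n =>
      rw [Finset.Nat.antidiagonalTuple_zero_succ]
      cases k with
      | zero => simp [stirling1]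
      | succ k => simp [stirling2]
  | succ j ih =>
    intro n k
    have hsplit : ∑ l ∈ Finset.Nat.antidiagonalTuple (j+1) n, ∏ i, gp (l i)
        = ∑ ab ∈ Finset.HasAntidiagonal.antidiagonal n,
            gp ab.1 * ∑ m ∈ Finset.Nat.antidiagonalTuple j ab.2, ∏ i, gp (m i) := by
      rw [sum_antidiagonalTuple_succ j n (fun l => ∏ i, gp (l i))]
      apply Finset.sum_congr rfl
      intro ab _
      rw [Finset.mul_sum]
      apply Finset.sum_congr rfl
      intro m _
      rw [Fin.prod_univ_succ]
      simp
    rw [hsplit, Polynomial.finset_sum_coeff]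
    have hterm : ∀ ab ∈ Finset.HasAntidiagonal.antidiagonal n,
        (gp ab.1 * ∑ m ∈ Finset.Nat.antidiagonalTuple j ab.2, ∏ i, gp (m i)).coeff k
        = ∑ pq ∈ Finset.HasAntidiagonal.antidiagonal k, (gp ab.1).coeff pq.1 *
            ((j.factorial : ℚ) / ab.2.factorial * stirling1 ab.2 pq.2 * stirling2 pq.2 j) := by
      intro ab _
      rw [Polynomial.coeff_mul]
      apply Finset.sum_congr rfl
      intro pq _
      rw [ih ab.2 pq.2]
    rw [Finset.sum_congr rfl hterm]
    -- replace gp coefficient by full formula minus the (0, n) correction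
    set F : ℕ × ℕ → ℚ := fun ab => ∑ pq ∈ Finset.HasAntidiagonal.antidiagonal k,
      ((ab.1.factorial : ℚ))⁻¹ * stirling1 ab.1 pq.1 *
        ((j.factorial : ℚ) / ab.2.factorial * stirling1 ab.2 pq.2 * stirling2 pq.2 j) with hF
    have hmem : ((0 : ℕ), n) ∈ Finset.HasAntidiagonal.antidiagonal n := by simp
    have step1 : ∑ ab ∈ Finset.HasAntidiagonal.antidiagonal n, (∑ pq ∈ Finset.HasAntidiagonal.antidiagonal k,
          (gp ab.1).coeff pq.1 *
            ((j.factorial : ℚ) / ab.2.factorial * stirling1 ab.2 pq.2 * stirling2 pq.2 j))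
        = (∑ ab ∈ Finset.HasAntidiagonal.antidiagonal n, F ab) - F (0, n) := by
      rw [← Finset.add_sum_erase _ F hmem, ← Finset.add_sum_erase _ _ hmem]
      have h0 : (∑ pq ∈ Finset.HasAntidiagonal.antidiagonal k, (gp (0:ℕ)).coeff pq.1 *
          ((j.factorial : ℚ) / n.factorial * stirling1 n pq.2 * stirling2 pq.2 j)) = 0 := by
        apply Finset.sum_eq_zero
        intro pq _
        rw [gp_coeff]
        simp
      rw [h0]
      have : ∀ ab ∈ (Finset.HasAntidiagonal.antidiagonal n).erase (0, n),
          (∑ pq ∈ Finset.HasAntidiagonal.antidiagonal k, (gp ab.1).coeff pq.1 *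
            ((j.factorial : ℚ) / ab.2.factorial * stirling1 ab.2 pq.2 * stirling2 pq.2 j))
          = F ab := by
        intro ab hab
        have hne : ab ≠ (0, n) := (Finset.mem_erase.mp hab).1
        have habm : ab.1 + ab.2 = n :=
          Finset.HasAntidiagonal.mem_antidiagonal.mp (Finset.mem_of_mem_erase hab)
        have ha1 : ab.1 ≠ 0 := by
          intro h
          apply hne
          have : ab.2 = n := by omega
          exact Prod.ext h this
        rw [hF]
        apply Finset.sum_congr rfl
        intro pq _
        rw [gp_coeff, if_neg ha1]
      rw [Finset.sum_congr rfl this]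
      ring
    rw [step1]
    have hF0 : F (0, n) = (j.factorial : ℚ) / n.factorial * stirling1 n k * stirling2 k j := by
      simp only [hF]
      rw [Finset.sum_eq_single_of_mem ((0:ℕ), k) (by simp)]
      · simp [stirling1]
      · intro pq hpq hne
        have hm : pq.1 + pq.2 = k := Finset.HasAntidiagonal.mem_antidiagonal.mp hpq
        have h1 : pq.1 ≠ 0 := by
          intro h
          exact hne (Prod.ext h (by omega))
        obtain ⟨p', hp'⟩ := Nat.exists_eq_succ_of_ne_zero h1
        rw [hp']
        simp [stirling1]
    have hSF : ∑ ab ∈ Finset.HasAntidiagonal.antidiagonal n, F ab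
        = (j.factorial : ℚ) / n.factorial * stirling1 n k * stirling2 (k+1) (j+1) := by
      rw [hF, Finset.sum_comm]
      have hinner : ∀ pq ∈ Finset.HasAntidiagonal.antidiagonal k,
          ∑ ab ∈ Finset.HasAntidiagonal.antidiagonal n,
            ((ab.1.factorial : ℚ))⁻¹ * stirling1 ab.1 pq.1 *
              ((j.factorial : ℚ) / ab.2.factorial * stirling1 ab.2 pq.2 * stirling2 pq.2 j)
          = (j.factorial : ℚ) / n.factorial * stirling1 n k *
              (k.choose pq.2 * stirling2 pq.2 j) := by
        intro pq hpq
        have hm : pq.1 + pq.2 = k := Finset.HasAntidiagonal.mem_antidiagonal.mp hpq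
        have hterm2 : ∀ ab ∈ Finset.HasAntidiagonal.antidiagonal n,
            ((ab.1.factorial : ℚ))⁻¹ * stirling1 ab.1 pq.1 *
              ((j.factorial : ℚ) / ab.2.factorial * stirling1 ab.2 pq.2 * stirling2 pq.2 j)
            = (j.factorial : ℚ) / n.factorial * stirling2 pq.2 j *
              (n.choose ab.1 * stirling1 ab.1 pq.1 * stirling1 ab.2 pq.2 : ℚ) := by
          intro ab hab
          have habm : ab.1 + ab.2 = n := Finset.HasAntidiagonal.mem_antidiagonal.mp hab
          have hcf : (n.choose ab.1 * ab.1.factorial * ab.2.factorial : ℕ) = n.factorial := by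
            have := Nat.choose_mul_factorial_mul_factorial (show ab.1 ≤ n by omega)
            rw [show n - ab.1 = ab.2 by omega] at this
            exact this
          have hne1 : (ab.1.factorial : ℚ) ≠ 0 := Nat.cast_ne_zero.mpr (Nat.factorial_ne_zero _)
          have hne2 : (ab.2.factorial : ℚ) ≠ 0 := Nat.cast_ne_zero.mpr (Nat.factorial_ne_zero _)
          have hnen : (n.factorial : ℚ) ≠ 0 := Nat.cast_ne_zero.mpr (Nat.factorial_ne_zero _)
          have hcfq : (n.choose ab.1 : ℚ) * ab.1.factorial * ab.2.factorial = n.factorial := by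
            exact_mod_cast congrArg (Nat.cast : ℕ → ℚ) hcf
          field_simp
          ring_nf
          ring_nf at hcfq
          rw [← hcfq]
          ring
        rw [Finset.sum_congr rfl hterm2, ← Finset.mul_sum, stirling1_conv, hm]
        have : (k.choose pq.2 : ℚ) * stirling1 n k * stirling2 pq.2 j
            = stirling1 n k * (k.choose pq.2 * stirling2 pq.2 j) := by ring
        ring
      rw [Finset.sum_congr rfl hinner, ← Finset.mul_sum]
      have hs2 : ∑ pq ∈ Finset.HasAntidiagonal.antidiagonal k, ((k.choose pq.2 : ℚ) * stirling2 pq.2 j)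
          = (stirling2 (k+1) (j+1) : ℚ) := by
        have hswap := Finset.Nat.sum_antidiagonal_swap
          (f := fun pq : ℕ × ℕ => (k.choose pq.1 : ℚ) * stirling2 pq.1 j) (n := k)
        simp only [Prod.fst_swap] at hswap
        rw [hswap, Finset.Nat.sum_antidiagonal_eq_sum_range_succ_mk]
        simp only
        exact_mod_cast congrArg (Nat.cast (R := ℚ)) (stirling2_sum k j)
      rw [hs2]
    rw [hF0, hSF]
    have hrec : (stirling2 (k+1) (j+1) : ℚ) = (j+1) * stirling2 k (j+1) + stirling2 k j := by
      norm_cast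
    rw [hrec]
    rw [Nat.factorial_succ]
    push_cast
    ring

/-- The sum, over all compositions `l_1+⋯+l_j = n` into positive parts, of the coefficient
of `t^k` in `(t^{(l_1)}/l_1!)⋯(t^{(l_j)}/l_j!)` equals `(j!/n!)·c(n,k)·S(k,j)`. -/
theorem sum_coeff_risingFactorials_typeA (n j k : ℕ) (hn : 1 ≤ n) (hj : j ≤ n) (hk : k ≤ n) :
    (∑ l ∈ (Finset.Nat.antidiagonalTuple j n).filter (fun l => ∀ i, 0 < l i),
      (∏ i, (Polynomial.C (((l i).factorial : ℚ)⁻¹) *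
        ∏ m ∈ Finset.range (l i), (Polynomial.X + (m : Polynomial ℚ)))).coeff k) =
    (j.factorial : ℚ) / (n.factorial : ℚ) * (stirling1 n k : ℚ) * (stirling2 k j : ℚ) := by
  have h1 : ∀ l ∈ (Finset.Nat.antidiagonalTuple j n).filter (fun l => ∀ i, 0 < l i),
      (∏ i, (Polynomial.C (((l i).factorial : ℚ)⁻¹) *
        ∏ m ∈ Finset.range (l i), (Polynomial.X + (m : Polynomial ℚ)))).coeff k
      = (∏ i, gp (l i)).coeff k := by
    intro l hl
    have hpos := (Finset.mem_filter.mp hl).2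
    congr 1
    apply Finset.prod_congr rfl
    intro i _
    rw [gp, if_neg (Nat.pos_iff_ne_zero.mp (hpos i))]
  rw [Finset.sum_congr rfl h1]
  rw [Finset.sum_filter_of_ne (by
    intro l hl hne
    by_contra hcon
    push_neg at hcon
    obtain ⟨i, hi⟩ := hcon
    have hzero : l i = 0 := by omega
    apply hne
    rw [Finset.prod_eq_zero (Finset.mem_univ i) (by rw [gp, if_pos hzero]), Polynomial.coeff_zero])]
  rw [← Polynomial.finset_sum_coeff]
  exact main_identity j n k
end
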